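/- Under the standing assumptions, let i satisfy k − l ≤ i ≤ k, and suppose that in w_i' the vertices v_a and v_b are each made internal at least once and the final time at which v_b is made internal occurs strictly before the first time at which v_a is made internal. Then every time t at which v_b is made internal in w_i' satisfies k ≤ t ≤ k + C + 2. -/

import Mathlib

/-!
Write `a_t`, `b_t` for the images of the midpoints of `v_a`, `v_b` under the prefix of length `t`
of `w = w_i'`, and `ℓ x = -⌊log₂ x⌋` for the dyadic depth of `x ∈ (0,1)`. Every letter changes
`ℓ (1 - b_t)` by at most one. Since `ℓ (1 - b_0) = k + 1` and `ℓ (1 - b_{T-1}) = ℓ (1/4) = 2` when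
`v_b` is made internal at time `T`, this gives `k ≤ T`.

For the upper bound let `t > T` be a time at which `v_a` is made internal. Between `T` and `t - 1`,
`ℓ (1 - b)` climbs from `ℓ (3/8) = 2` by at most one per letter. The potential
`ℓ (1 - b) - ℓ b + 2 ℓ a` also climbs by at most one per letter; at time `t - 1`, where `a = 3/4`,
it is at most `ℓ (1 - b) + 1`, and at the end it equals `2k + i + 2`, computed from `w̄ = w̄_i`.
Hence `T + 2k + i ≤ |w| + 1`, while quasi-geodesicity gives `|w| ≤ |w_i| + c = 3k + 1 + i + c`.
-/

namespace ThompsonAut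

/-- The alphabet `X = {x₀, x₁, x₀⁻¹, x₁⁻¹}`. -/
inductive Letter : Type
  | x0 | x1 | x0inv | x1inv
  deriving DecidableEq

/-- A word over `X`. -/
abbrev Word := List Letter

/-- The four generating homeomorphisms, extended by the identity outside `[0,1]`. -/
noncomputable def letterFun : Letter → ℝ → ℝ
  | Letter.x0 => fun x =>
      if x < 0 then x
      else if x ≤ 1/4 then 2*x
      else if x ≤ 1/2 then x + 1/4
      else if x ≤ 1 then (x+1)/2
      else x
  | Letter.x1 => fun x =>
      if x ≤ 1/2 then x
      else if x ≤ 5/8 then 2*x - 1/2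
      else if x ≤ 3/4 then x + 1/8
      else if x ≤ 1 then (x+1)/2
      else x
  | Letter.x0inv => fun x =>
      if x < 0 then x
      else if x ≤ 1/2 then x/2
      else if x ≤ 3/4 then x - 1/4
      else if x ≤ 1 then 2*x - 1
      else x
  | Letter.x1inv => fun x =>
      if x ≤ 1/2 then x
      else if x ≤ 3/4 then x/2 + 1/4
      else if x ≤ 7/8 then x - 1/8
      else if x ≤ 1 then 2*x - 1
      else x

/-- The element of `F` represented by a word, composing the letters left-to-right. -/
noncomputable def wordEval (w : Word) (x : ℝ) : ℝ :=
  w.foldl (fun y l => letterFun l y) x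

/-- Dyadic rational numbers. -/
def IsDyadic (x : ℝ) : Prop := ∃ (a : ℤ) (n : ℕ), x = (a : ℝ) / 2 ^ n

/-- Membership in Thompson's group `F`: (extended-by-identity) piecewise-linear
homeomorphisms of `[0,1]`, differentiable except at finitely many dyadic rationals,
all slopes integral powers of `2`. -/
def InF (f : ℝ → ℝ) : Prop :=
  StrictMono f ∧ Function.Bijective f ∧
    (∀ x : ℝ, x ≤ 0 → f x = x) ∧ (∀ x : ℝ, 1 ≤ x → f x = x) ∧
    ∃ D : Finset ℝ, (∀ x ∈ D, IsDyadic x) ∧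
      ∀ x : ℝ, x ∉ D → ∃ n : ℤ, HasDerivAt f ((2 : ℝ) ^ n) x

/-- `|g|_X`: the minimal length of a word over `X` representing `g`. -/
noncomputable def glen (f : ℝ → ℝ) : ℕ :=
  sInf {n : ℕ | ∃ w : Word, wordEval w = f ∧ w.length = n}

/-- `|f⁻¹ g|_X` (left-to-right composition: apply `f⁻¹` first, then `g`). -/
noncomputable def groupDist (f g : ℝ → ℝ) : ℕ :=
  glen (fun x => g (Function.invFun f x))

/-- The `M`-fellow-traveler property for pairs of words of `L` representing elements
at distance at most one in the Cayley graph. -/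
def FellowTraveler (L : Set Word) (M : ℕ) : Prop :=
  ∀ w ∈ L, ∀ v ∈ L, groupDist (wordEval w) (wordEval v) ≤ 1 →
    ∀ t : ℕ, groupDist (wordEval (w.take t)) (wordEval (v.take t)) ≤ M

/-- `w_i = x₀^{-(k-1)} x₁⁻¹ x₀^{2k} x₁⁻¹ x₀^{-i}`. -/
def wword (k i : ℕ) : Word :=
  List.replicate (k - 1) Letter.x0inv ++ [Letter.x1inv] ++
    List.replicate (2 * k) Letter.x0 ++ [Letter.x1inv] ++ List.replicate i Letter.x0inv

/-- `f_k = x₀^{-(k-1)} x₁⁻¹ x₀^{2k} x₁⁻¹ x₀^{-k}`. -/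
def fword (k : ℕ) : Word := wword k k

/-- `u_i = x₀^{k+1} x₁⁻¹ x₀^{-(2k-1)} x₁⁻¹ x₀^{i}`. -/
def uword (k i : ℕ) : Word :=
  List.replicate (k + 1) Letter.x0 ++ [Letter.x1inv] ++
    List.replicate (2 * k - 1) Letter.x0inv ++ [Letter.x1inv] ++ List.replicate i Letter.x0

/-- `g_k = x₀^{k+1} x₁⁻¹ x₀^{-(2k-1)} x₁⁻¹ x₀^{k-1}`. -/
def gword (k : ℕ) : Word := uword k (k - 1)

/-- A vertex of the infinite binary tree: the standard dyadic interval
`[idx/2^depth, (idx+1)/2^depth]`. -/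
structure Vertex : Type where
  depth : ℕ
  idx : ℕ
  isLt : idx < 2 ^ depth

/-- The midpoint of the standard dyadic interval of a vertex. -/
noncomputable def Vertex.mid (v : Vertex) : ℝ := (2 * v.idx + 1) / 2 ^ (v.depth + 1)

/-- The depth of the lowest common ancestor of two vertices of the tree. -/
noncomputable def lcaDepth (u v : Vertex) : ℕ :=
  sSup {j : ℕ | j ≤ u.depth ∧ j ≤ v.depth ∧
    u.idx / 2 ^ (u.depth - j) = v.idx / 2 ^ (v.depth - j)}

/-- The number of edges on the geodesic path between two vertices of the tree. -/
noncomputable def treeDist (u v : Vertex) : ℕ :=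
  (u.depth - lcaDepth u v) + (v.depth - lcaDepth u v)

/-- The pivot vertex `[1/2, 1]`. -/
def pivotVertex : Vertex := ⟨1, 1, by norm_num⟩

/-- Tree distance from the vertex with midpoint `y` to the pivot `[1/2, 1]`. -/
noncomputable def distToPivot (y : ℝ) : ℕ :=
  sInf {d : ℕ | ∃ u : Vertex, Vertex.mid u = y ∧ treeDist u pivotVertex = d}

/-- `d_a(w(t))` for the vertex with midpoint `v`. -/
noncomputable def dA (w : Word) (t : ℕ) (v : ℝ) : ℕ :=
  distToPivot (wordEval (w.take t) v)

/-- Midpoints of exterior vertices: `[0, 2^{-p}]` (`p ≥ 0`) or `[1 - 2^{-q}, 1]` (`q ≥ 1`). -/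
def IsExteriorMid (x : ℝ) : Prop :=
  (∃ p : ℕ, x = (1/2 : ℝ) ^ (p + 1)) ∨ (∃ q : ℕ, 1 ≤ q ∧ x = 1 - (1/2 : ℝ) ^ (q + 1))

/-- Midpoints of interior vertices. -/
def IsInteriorMid (x : ℝ) : Prop :=
  IsDyadic x ∧ 0 < x ∧ x < 1 ∧ ¬ IsExteriorMid x

/-- The vertex with midpoint `v` is internal at time `t` in `w`. -/
def internalAt (w : Word) (t : ℕ) (v : ℝ) : Prop :=
  IsInteriorMid (wordEval (w.take t) v)

/-- The vertex with midpoint `v` is made internal at time `t` in `w`. -/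
def madeInternalAt (w : Word) (t : ℕ) (v : ℝ) : Prop :=
  wordEval (w.take t) v = 5/8 ∧ wordEval (w.take (t - 1)) v = 3/4

/-- The vertex with midpoint `v` is made external at time `t` in `w`. -/
def madeExternalAt (w : Word) (t : ℕ) (v : ℝ) : Prop :=
  wordEval (w.take t) v = 3/4 ∧ wordEval (w.take (t - 1)) v = 5/8

/-- Midpoint of `v_a = [0, 2^{-k}]`. -/
noncomputable def vaMid (k : ℕ) : ℝ := (1/2 : ℝ) ^ (k + 1)

/-- Midpoint of `v_b = [1 - 2^{-k}, 1]`. -/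
noncomputable def vbMid (k : ℕ) : ℝ := 1 - (1/2 : ℝ) ^ (k + 1)

/-- Midpoints of the vertices of `A = {[0, 2^{-p}] : 0 ≤ p ≤ k-1}`. -/
def Amid (k : ℕ) : Set ℝ := {x | ∃ p : ℕ, p ≤ k - 1 ∧ x = (1/2 : ℝ) ^ (p + 1)}

/-- Midpoints of the vertices of `B = {[1 - 2^{-q}, 1] : 1 ≤ q ≤ k-1}`. -/
def Bmid (k : ℕ) : Set ℝ := {x | ∃ q : ℕ, 1 ≤ q ∧ q ≤ k - 1 ∧ x = 1 - (1/2 : ℝ) ^ (q + 1)}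

/-- Condition (1) for the `w_i'` words: `v_a` and `v_b` are each made internal at least
once, and the final time `v_b` is made internal is strictly before the first time `v_a`
is made internal. -/
def CondW1 (w : Word) (k : ℕ) : Prop :=
  (∃ t : ℕ, madeInternalAt w t (vbMid k)) ∧ (∃ t : ℕ, madeInternalAt w t (vaMid k)) ∧
    ∀ s t : ℕ, madeInternalAt w s (vbMid k) → madeInternalAt w t (vaMid k) → s < t

/-- Condition (2) for the `w_i'` words: no vertex of `B` is internal at any time at
which `v_a` is made internal. -/
def CondW2 (w : Word) (k : ℕ) : Prop :=
  ∀ t : ℕ, madeInternalAt w t (vaMid k) → ∀ x ∈ Bmid k, ¬ internalAt w t x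

/-- Condition (1) for the `u_i'` words: `v_a` and `v_b` are each made internal at least
once, and the final time `v_a` is made internal is strictly before the first time `v_b`
is made internal. -/
def CondU1 (w : Word) (k : ℕ) : Prop :=
  (∃ t : ℕ, madeInternalAt w t (vaMid k)) ∧ (∃ t : ℕ, madeInternalAt w t (vbMid k)) ∧
    ∀ s t : ℕ, madeInternalAt w s (vaMid k) → madeInternalAt w t (vbMid k) → s < t

/-- Condition (2) for the `u_i'` words: at the final time at which `v_a` is made
internal, at most `C` of the vertices of `B` are internal. -/
def CondU2 (w : Word) (k C : ℕ) : Prop :=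
  ∀ t : ℕ, madeInternalAt w t (vaMid k) → (∀ s : ℕ, madeInternalAt w s (vaMid k) → s ≤ t) →
    {x ∈ Bmid k | internalAt w t x}.Finite ∧ {x ∈ Bmid k | internalAt w t x}.ncard ≤ C

/-- A language over `X` is regular iff it is accepted by a finite state automaton. -/
def IsRegularLang (L : Set Word) : Prop :=
  ∃ (σ : Type) (_ : Fintype σ) (M : DFA Letter σ), ∀ w : Word, w ∈ M.accepts ↔ w ∈ L

open Set

section Letters

theorem letterFun_eq_self_of_nonpos (l : Letter) {x : ℝ} (hx : x ≤ 0) : letterFun l x = x := by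
  cases l <;> simp only [letterFun] <;> split_ifs <;> linarith

theorem letterFun_eq_self_of_one_le (l : Letter) {x : ℝ} (hx : 1 ≤ x) : letterFun l x = x := by
  cases l <;> simp only [letterFun] <;> split_ifs <;> linarith

theorem letterFun_strictMono (l : Letter) : StrictMono (letterFun l) := by
  intro x y h
  cases l <;> simp only [letterFun] <;> split_ifs <;> linarith

def Letter.inv : Letter → Letter
  | .x0 => .x0inv
  | .x0inv => .x0
  | .x1 => .x1inv
  | .x1inv => .x1

theorem Letter.inv_inv (l : Letter) : l.inv.inv = l := by
  cases l <;> rfl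

theorem letterFun_inv_letterFun (l : Letter) (x : ℝ) : letterFun l.inv (letterFun l x) = x := by
  cases l <;> simp only [letterFun, Letter.inv] <;> split_ifs <;> linarith

theorem letterFun_bijective (l : Letter) : Function.Bijective (letterFun l) :=
  Function.bijective_iff_has_inverse.2 ⟨letterFun l.inv, letterFun_inv_letterFun l,
    fun x => by simpa only [Letter.inv_inv] using letterFun_inv_letterFun l.inv x⟩

variable {x : ℝ}

theorem letterFun_mem_Icc (l : Letter) (hx : x ∈ Ioo 0 1) :
    letterFun l x ∈ Icc (x / 2) (2 * x) := by
  obtain ⟨h0, h1⟩ := hx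
  constructor <;> cases l <;> simp only [letterFun] <;> split_ifs <;> linarith

theorem one_sub_letterFun_mem_Icc (l : Letter) (hx : x ∈ Ioo 0 1) :
    1 - letterFun l x ∈ Icc ((1 - x) / 2) (2 * (1 - x)) := by
  obtain ⟨h0, h1⟩ := hx
  constructor <;> cases l <;> simp only [letterFun] <;> split_ifs <;> linarith

theorem letterFun_mem_Ioo (l : Letter) (hx : x ∈ Ioo 0 1) : letterFun l x ∈ Ioo 0 1 := by
  have h := letterFun_mem_Icc l hx
  have h' := one_sub_letterFun_mem_Icc l hx
  exact ⟨by linarith [h.1, hx.1], by linarith [h'.1, hx.2]⟩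

theorem self_le_letterFun_x0 (hx : x ∈ Icc 0 1) : x ≤ letterFun .x0 x := by
  obtain ⟨h0, h1⟩ := hx
  simp only [letterFun]; split_ifs <;> linarith

theorem letterFun_x0inv_le_self (hx : x ∈ Icc 0 1) : letterFun .x0inv x ≤ x := by
  obtain ⟨h0, h1⟩ := hx
  simp only [letterFun]; split_ifs <;> linarith

theorem one_sub_letterFun_x0inv (hx : x ∈ Icc (3 / 4) 1) :
    1 - letterFun .x0inv x = 2 * (1 - x) := by
  obtain ⟨h0, h1⟩ := hx
  simp only [letterFun]; split_ifs <;> linarith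

end Letters

section Words

theorem wordEval_append (u v : Word) (x : ℝ) :
    wordEval (u ++ v) x = wordEval v (wordEval u x) := by
  simp only [wordEval, List.foldl_append]

theorem wordEval_singleton (l : Letter) (x : ℝ) : wordEval [l] x = letterFun l x := rfl

theorem wordEval_replicate (n : ℕ) (l : Letter) :
    wordEval (List.replicate n l) = (letterFun l)^[n] := by
  funext x
  induction n generalizing x with
  | zero => rfl
  | succ n ih => exact ih (letterFun l x)

theorem wordEval_mem_Ioo (w : Word) {x : ℝ} (hx : x ∈ Ioo 0 1) : wordEval w x ∈ Ioo 0 1 := by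
  induction w generalizing x with
  | nil => exact hx
  | cons l w ih => exact ih (letterFun_mem_Ioo l hx)

theorem glen_wordEval_le (w : Word) : glen (wordEval w) ≤ w.length :=
  Nat.sInf_le ⟨w, rfl, rfl⟩

theorem length_wword (k i : ℕ) : (wword k i).length = k - 1 + 2 * k + i + 2 := by
  simp only [wword, List.length_append, List.length_replicate, List.length_singleton]
  omega

end Words

section Dyadic

variable {x d : ℝ}

theorem IsDyadic.add {y : ℝ} (hx : IsDyadic x) (hy : IsDyadic y) : IsDyadic (x + y) := by
  obtain ⟨a, n, rfl⟩ := hx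
  obtain ⟨b, m, rfl⟩ := hy
  refine ⟨a * 2 ^ m + b * 2 ^ n, n + m, ?_⟩
  push_cast
  field_simp
  ring

theorem IsDyadic.neg (hx : IsDyadic x) : IsDyadic (-x) := by
  obtain ⟨a, n, rfl⟩ := hx
  exact ⟨-a, n, by push_cast; ring⟩

theorem IsDyadic.two_mul (hx : IsDyadic x) : IsDyadic (2 * x) := by
  obtain ⟨a, n, rfl⟩ := hx
  exact ⟨2 * a, n, by push_cast; ring⟩

theorem IsDyadic.div_two (hx : IsDyadic x) : IsDyadic (x / 2) := by
  obtain ⟨a, n, rfl⟩ := hx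
  exact ⟨a, n + 1, by rw [pow_succ]; ring⟩

theorem isDyadic_two_mul_iff : IsDyadic (2 * x) ↔ IsDyadic x :=
  ⟨fun h => by simpa using h.div_two, IsDyadic.two_mul⟩

theorem isDyadic_div_two_iff : IsDyadic (x / 2) ↔ IsDyadic x :=
  ⟨fun h => by simpa [mul_div_cancel₀] using h.two_mul, IsDyadic.div_two⟩

theorem isDyadic_add_right_iff (hd : IsDyadic d) : IsDyadic (x + d) ↔ IsDyadic x :=
  ⟨fun h => by simpa using h.add hd.neg, fun h => h.add hd⟩

theorem isDyadic_sub_right_iff (hd : IsDyadic d) : IsDyadic (x - d) ↔ IsDyadic x := by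
  rw [sub_eq_add_neg, isDyadic_add_right_iff hd.neg]

theorem isDyadic_letterFun_iff (l : Letter) : IsDyadic (letterFun l x) ↔ IsDyadic x := by
  have h1 : IsDyadic 1 := ⟨1, 0, by norm_num⟩
  have h2 : IsDyadic (1 / 2) := ⟨1, 1, by norm_num⟩
  have h4 : IsDyadic (1 / 4) := ⟨1, 2, by norm_num⟩
  have h8 : IsDyadic (1 / 8) := ⟨1, 3, by norm_num⟩
  cases l <;> simp only [letterFun] <;> split_ifs <;>
    simp only [isDyadic_two_mul_iff, isDyadic_div_two_iff, isDyadic_add_right_iff,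
      isDyadic_sub_right_iff, h1, h2, h4, h8]

end Dyadic

section Derivative

noncomputable def letterBreakpoints : Finset ℝ := {0, 1/4, 1/2, 5/8, 3/4, 7/8, 1}

theorem isDyadic_of_mem_letterBreakpoints {x : ℝ} (hx : x ∈ letterBreakpoints) :
    IsDyadic x := by
  refine ⟨⌊x * 8⌋, 3, ?_⟩
  simp only [letterBreakpoints, Finset.mem_insert, Finset.mem_singleton] at hx
  rcases hx with rfl | rfl | rfl | rfl | rfl | rfl | rfl <;> norm_num

def HasPowTwoDerivAt (f : ℝ → ℝ) (x : ℝ) : Prop := ∃ n : ℤ, HasDerivAt f ((2 : ℝ) ^ n) x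

namespace HasPowTwoDerivAt

variable {f g : ℝ → ℝ} {c x : ℝ}

theorem of_affine (n : ℤ) (hf : ∀ y, f y = 2 ^ n * y + f 0) : HasPowTwoDerivAt f x := by
  refine ⟨n, HasDerivAt.congr_of_eventuallyEq ?_ (Filter.Eventually.of_forall hf)⟩
  simpa using ((hasDerivAt_id x).const_mul ((2 : ℝ) ^ n)).add_const (f 0)

theorem ite_le (hx : x ≠ c) (hf : HasPowTwoDerivAt f x) (hg : HasPowTwoDerivAt g x) :
    HasPowTwoDerivAt (fun y => if y ≤ c then f y else g y) x := by
  rcases hx.lt_or_gt with h | h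
  · obtain ⟨n, hn⟩ := hf
    refine ⟨n, hn.congr_of_eventuallyEq ?_⟩
    filter_upwards [eventually_lt_nhds h] with y hy
    simp [hy.le]
  · obtain ⟨n, hn⟩ := hg
    refine ⟨n, hn.congr_of_eventuallyEq ?_⟩
    filter_upwards [eventually_gt_nhds h] with y hy
    simp [not_le.2 hy]

theorem ite_lt (hx : x ≠ c) (hf : HasPowTwoDerivAt f x) (hg : HasPowTwoDerivAt g x) :
    HasPowTwoDerivAt (fun y => if y < c then f y else g y) x := by
  rcases hx.lt_or_gt with h | h
  · obtain ⟨n, hn⟩ := hf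
    refine ⟨n, hn.congr_of_eventuallyEq ?_⟩
    filter_upwards [eventually_lt_nhds h] with y hy
    simp [hy]
  · obtain ⟨n, hn⟩ := hg
    refine ⟨n, hn.congr_of_eventuallyEq ?_⟩
    filter_upwards [eventually_gt_nhds h] with y hy
    simp [not_lt.2 hy.le]

end HasPowTwoDerivAt

theorem hasPowTwoDerivAt_letterFun (l : Letter) {x : ℝ} (hx : x ∉ letterBreakpoints) :
    HasPowTwoDerivAt (letterFun l) x := by
  simp only [letterBreakpoints, Finset.mem_insert, Finset.mem_singleton, not_or] at hx
  obtain ⟨_, _, _, _, _, _, _⟩ := hx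
  cases l <;> simp only [letterFun] <;>
    repeat' first
      | assumption
      | apply HasPowTwoDerivAt.ite_lt
      | apply HasPowTwoDerivAt.ite_le
      | (apply HasPowTwoDerivAt.of_affine 0; intro y; simp only [zpow_zero]; ring1)
      | (apply HasPowTwoDerivAt.of_affine 1; intro y; simp only [zpow_one]; ring1)
      | (apply HasPowTwoDerivAt.of_affine (-1); intro y; simp only [zpow_neg, zpow_one]; ring1)

theorem InF.comp_letterFun {g : ℝ → ℝ} (hg : InF g) (l : Letter) :
    InF (fun x => g (letterFun l x)) := by
  obtain ⟨hmono, hbij, hle, hge, D, hD, hderiv⟩ := hg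
  have hfin : (letterFun l ⁻¹' D).Finite :=
    D.finite_toSet.preimage (letterFun_strictMono l).injective.injOn
  refine ⟨hmono.comp (letterFun_strictMono l), hbij.comp (letterFun_bijective l),
    fun x hx => show g (letterFun l x) = x by rw [letterFun_eq_self_of_nonpos l hx, hle x hx],
    fun x hx => show g (letterFun l x) = x by rw [letterFun_eq_self_of_one_le l hx, hge x hx],
    letterBreakpoints ∪ hfin.toFinset, ?_, ?_⟩
  · intro x hx
    rcases Finset.mem_union.1 hx with h | h
    · exact isDyadic_of_mem_letterBreakpoints h
    · exact (isDyadic_letterFun_iff l).1 (hD _ (by simpa using h))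
  · intro x hx
    simp only [Finset.mem_union, not_or, Set.Finite.mem_toFinset, Set.mem_preimage] at hx
    obtain ⟨m, hm⟩ := hderiv _ hx.2
    obtain ⟨n, hn⟩ := hasPowTwoDerivAt_letterFun l hx.1
    exact ⟨m + n, by rw [zpow_add₀ two_ne_zero]; exact hm.comp x hn⟩

theorem inF_wordEval (w : Word) : InF (wordEval w) := by
  induction w with
  | nil => exact ⟨strictMono_id, Function.bijective_id, fun _ _ => rfl, fun _ _ => rfl, ∅,
      by simp, fun x _ => ⟨0, by rw [zpow_zero]; exact hasDerivAt_id' x⟩⟩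
  | cons l w ih => exact ih.comp_letterFun l

end Derivative

section Log

variable {x y : ℝ}

theorem log_two_eq_of_zpow_le_of_lt {m : ℤ} (h1 : (2 : ℝ) ^ m ≤ x) (h2 : x < 2 ^ (m + 1)) :
    Int.log 2 x = m := by
  have hx : 0 < x := (zpow_pos two_pos m).trans_le h1
  have hle : m ≤ Int.log 2 x := (Int.zpow_le_iff_le_log one_lt_two hx).1 (by exact_mod_cast h1)
  have hlt : Int.log 2 x < m + 1 :=
    (Int.lt_zpow_iff_log_lt one_lt_two hx).1 (by exact_mod_cast h2)
  omega

theorem log_two_div_two (hx : 0 < x) : Int.log 2 (x / 2) = Int.log 2 x - 1 := by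
  have h1 : (2 : ℝ) ^ Int.log 2 x ≤ x := by exact_mod_cast Int.zpow_log_le_self one_lt_two hx
  have h2 : x < (2 : ℝ) ^ (Int.log 2 x + 1) := by
    exact_mod_cast Int.lt_zpow_succ_log_self one_lt_two x
  apply log_two_eq_of_zpow_le_of_lt
  · rw [zpow_sub₀ two_ne_zero, zpow_one]; linarith
  · rw [zpow_add_one₀ two_ne_zero] at h2
    rw [sub_add_cancel]; linarith

theorem log_two_two_mul (hx : 0 < x) : Int.log 2 (2 * x) = Int.log 2 x + 1 := by
  have := log_two_div_two (x := 2 * x) (by positivity)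
  rw [mul_div_cancel_left₀ x two_ne_zero] at this
  omega

theorem abs_log_two_sub_le_one (hx : 0 < x) (hy : y ∈ Icc (x / 2) (2 * x)) :
    |Int.log 2 y - Int.log 2 x| ≤ 1 := by
  have h1 := Int.log_mono_right (b := 2) (by positivity) hy.1
  have h2 := Int.log_mono_right (b := 2) ((half_pos hx).trans_le hy.1) hy.2
  rw [log_two_div_two hx] at h1
  rw [log_two_two_mul hx] at h2
  rw [abs_le]
  constructor <;> linarith

theorem log_two_of_mem_Ico (hx : x ∈ Ico (1 / 2) 1) : Int.log 2 x = -1 :=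
  log_two_eq_of_zpow_le_of_lt (by norm_num; exact hx.1) (by norm_num; exact hx.2)

theorem log_two_three_div_two_pow (m : ℕ) : Int.log 2 (3 / 2 ^ m : ℝ) = 1 - m := by
  apply log_two_eq_of_zpow_le_of_lt
  · rw [zpow_sub₀ two_ne_zero, zpow_one, zpow_natCast]
    gcongr; norm_num
  · rw [show 1 - (m : ℤ) + 1 = 2 - m by ring, zpow_sub₀ two_ne_zero, zpow_natCast]
    gcongr; norm_num

theorem log_two_inv_two_pow (m : ℕ) : Int.log 2 ((1 / 2) ^ m : ℝ) = -m := by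
  have := Int.log_zpow (R := ℝ) one_lt_two (-m)
  simpa [zpow_neg, zpow_natCast] using this

theorem log_two_letterFun_x0 (hx : x ∈ Ioo 0 (1 / 2)) :
    Int.log 2 (letterFun .x0 x) = Int.log 2 x + 1 := by
  obtain ⟨h0, h1⟩ := hx
  rcases le_or_gt x (1 / 4) with h | h
  · have : letterFun .x0 x = 2 * x := by simp only [letterFun]; split_ifs <;> linarith
    rw [this, log_two_two_mul h0]
  · have : letterFun .x0 x = x + 1 / 4 := by simp only [letterFun]; split_ifs <;> linarith
    rw [this, log_two_of_mem_Ico (x := x + 1 / 4) ⟨by linarith, by linarith⟩,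
      log_two_eq_of_zpow_le_of_lt (m := -2) (by norm_num; linarith) (by norm_num; linarith)]
    norm_num

theorem log_two_letterFun_x0inv (hx : x ∈ Ioo 0 (3 / 4)) :
    Int.log 2 (letterFun .x0inv x) = Int.log 2 x - 1 := by
  obtain ⟨h0, h1⟩ := hx
  rcases le_or_gt x (1 / 2) with h | h
  · have : letterFun .x0inv x = x / 2 := by simp only [letterFun]; split_ifs <;> linarith
    rw [this, log_two_div_two h0]
  · have : letterFun .x0inv x = x - 1 / 4 := by simp only [letterFun]; split_ifs <;> linarith
    rw [this, log_two_of_mem_Ico (x := x) ⟨by linarith, by linarith⟩,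
      log_two_eq_of_zpow_le_of_lt (m := -2) (by norm_num; linarith) (by norm_num; linarith)]
    norm_num

theorem log_two_letterFun_of_eq_x1_or_x1inv {l : Letter} (hl : l = .x1 ∨ l = .x1inv)
    (hx : x ∈ Ioo 0 1) : Int.log 2 (letterFun l x) = Int.log 2 x := by
  rcases le_or_gt x (1 / 2) with h | h
  · have : letterFun l x = x := by
      rcases hl with rfl | rfl <;> simp only [letterFun] <;> split_ifs <;> linarith
    rw [this]
  · have : 1 / 2 ≤ letterFun l x := by
      rcases hl with rfl | rfl <;> simp only [letterFun] <;> split_ifs <;> linarith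
    rw [log_two_of_mem_Ico ⟨this, (letterFun_mem_Ioo l hx).2⟩,
      log_two_of_mem_Ico ⟨h.le, hx.2⟩]

end Log

section Potential

noncomputable def potential (a b : ℝ) : ℤ := Int.log 2 b - Int.log 2 (1 - b) - 2 * Int.log 2 a

/- An `x₀⁻¹` step lowers `ℓ (1 - b) - ℓ b` by at least one and raises `ℓ a` by at most one; the
only step raising `ℓ (1 - b) - ℓ b` by two is `x₀` with `b < 1/2`, which also lowers `ℓ a`. -/
theorem potential_letterFun_le (l : Letter) {a b : ℝ} (ha : 0 < a) (hab : a < b) (hb : b < 1) :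
    potential (letterFun l a) (letterFun l b) ≤ potential a b + 1 := by
  have ha' : a ∈ Ioo 0 1 := ⟨ha, hab.trans hb⟩
  have hb' : b ∈ Ioo 0 1 := ⟨ha.trans hab, hb⟩
  have hΔa := abs_log_two_sub_le_one ha (letterFun_mem_Icc l ha')
  have hΔb := abs_log_two_sub_le_one hb'.1 (letterFun_mem_Icc l hb')
  have hΔc := abs_log_two_sub_le_one (sub_pos.2 hb) (one_sub_letterFun_mem_Icc l hb')
  rw [abs_le] at hΔa hΔb hΔc
  unfold potential
  cases l
  · have hLa := Int.log_mono_right (b := 2) ha (self_le_letterFun_x0 ⟨ha.le, ha'.2.le⟩)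
    rcases lt_or_ge b (1 / 2) with h | h
    · have := log_two_letterFun_x0 ⟨ha, hab.trans h⟩
      omega
    · have hb2 : 1 / 2 ≤ letterFun .x0 b := h.trans (self_le_letterFun_x0 ⟨hb'.1.le, hb.le⟩)
      rw [log_two_of_mem_Ico ⟨h, hb⟩, log_two_of_mem_Ico ⟨hb2, (letterFun_mem_Ioo _ hb').2⟩]
      omega
  · have := log_two_letterFun_of_eq_x1_or_x1inv (Or.inl rfl) ha'
    have := log_two_letterFun_of_eq_x1_or_x1inv (Or.inl rfl) hb'
    omega
  · have hLb := Int.log_mono_right (b := 2) (letterFun_mem_Ioo .x0inv hb').1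
      (letterFun_x0inv_le_self ⟨hb'.1.le, hb.le⟩)
    have hLc := Int.log_mono_right (b := 2) (sub_pos.2 hb)
      (sub_le_sub_left (letterFun_x0inv_le_self ⟨hb'.1.le, hb.le⟩) 1)
    rcases lt_or_ge b (3 / 4) with h | h
    · have := log_two_letterFun_x0inv ⟨hb'.1, h⟩
      omega
    · rw [one_sub_letterFun_x0inv ⟨h, hb.le⟩, log_two_two_mul (sub_pos.2 hb)]
      omega
  · have := log_two_letterFun_of_eq_x1_or_x1inv (Or.inr rfl) ha'
    have := log_two_letterFun_of_eq_x1_or_x1inv (Or.inr rfl) hb'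
    omega

theorem potential_three_div_two_pow {m n : ℕ} (hn : 3 ≤ n) :
    potential (3 / 2 ^ m) (1 - 3 / 2 ^ n) = n + 2 * m - 4 := by
  have hsmall : (3 : ℝ) / 2 ^ n ≤ 1 / 2 := by
    rw [div_le_iff₀ (by positivity)]
    have : (2 : ℝ) ^ 3 ≤ 2 ^ n := pow_le_pow_right₀ one_le_two hn
    linarith
  rw [potential, sub_sub_cancel, log_two_of_mem_Ico ⟨by linarith, sub_lt_self 1 (by positivity)⟩,
    log_two_three_div_two_pow, log_two_three_div_two_pow]
  ring

theorem potential_three_quarters_le {b : ℝ} (hb : b ∈ Ioo 0 1) :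
    potential (3 / 4) b ≤ 1 - Int.log 2 (1 - b) := by
  have : Int.log 2 b < 0 := (Int.lt_zpow_iff_log_lt one_lt_two hb.1).1 (by simpa using hb.2)
  rw [potential, show (3 / 4 : ℝ) = 3 / 2 ^ 2 by norm_num, log_two_three_div_two_pow]
  omega

end Potential

section Prefixes

theorem take_sub_le_of_step_le (Φ : (ℝ → ℝ) → ℤ)
    (hΦ : ∀ (u : Word) (l : Letter), Φ (wordEval (u ++ [l])) ≤ Φ (wordEval u) + 1)
    (w : Word) {s t : ℕ} (hst : s ≤ t) :
    Φ (wordEval (w.take t)) - Φ (wordEval (w.take s)) ≤ t - s := by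
  induction t, hst using Nat.le_induction with
  | base => simp
  | succ t hst ih =>
    rw [List.take_add_one]
    cases w[t]? with
    | none => simp only [Option.toList_none, List.append_nil]; push_cast; omega
    | some l =>
      have := hΦ (w.take t) l
      simp only [Option.toList_some]; push_cast; omega

theorem abs_log_two_one_sub_take_sub_le (w : Word) {x : ℝ} (hx : x ∈ Ioo 0 1) {s t : ℕ}
    (hst : s ≤ t) :
    |Int.log 2 (1 - wordEval (w.take t) x) - Int.log 2 (1 - wordEval (w.take s) x)| ≤ t - s := by
  have hstep (u : Word) (l : Letter) :
      |Int.log 2 (1 - wordEval (u ++ [l]) x) - Int.log 2 (1 - wordEval u x)| ≤ 1 := by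
    have hu := wordEval_mem_Ioo u hx
    rw [wordEval_append, wordEval_singleton]
    exact abs_log_two_sub_le_one (sub_pos.2 hu.2) (one_sub_letterFun_mem_Icc l hu)
  have hup := take_sub_le_of_step_le (fun f => Int.log 2 (1 - f x))
    (fun u l => by have := abs_le.1 (hstep u l); linarith) w hst
  have hdown := take_sub_le_of_step_le (fun f => -Int.log 2 (1 - f x))
    (fun u l => by have := abs_le.1 (hstep u l); linarith) w hst
  rw [abs_le]
  constructor <;> linarith

theorem potential_take_sub_le (w : Word) {a b : ℝ} (ha : 0 < a) (hab : a < b) (hb : b < 1)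
    {s t : ℕ} (hst : s ≤ t) :
    potential (wordEval (w.take t) a) (wordEval (w.take t) b)
      - potential (wordEval (w.take s) a) (wordEval (w.take s) b) ≤ t - s := by
  refine take_sub_le_of_step_le (fun f => potential (f a) (f b)) (fun u l => ?_) w hst
  simp only [wordEval_append, wordEval_singleton]
  exact potential_letterFun_le l (wordEval_mem_Ioo u ⟨ha, hab.trans hb⟩).1
    ((inF_wordEval u).1 hab) (wordEval_mem_Ioo u ⟨ha.trans hab, hb⟩).2

end Prefixes

section Iterate

variable {y : ℝ}

theorem letterFun_x0_iterate_div_two_pow (n : ℕ) (hy : y ∈ Icc 0 (1 / 2)) :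
    (letterFun .x0)^[n] (y / 2 ^ n) = y := by
  induction n generalizing y with
  | zero => simp
  | succ n ih =>
    have h0 : 0 ≤ y / 2 ^ (n + 1) := div_nonneg hy.1 (by positivity)
    have h1 : y / 2 ^ (n + 1) ≤ 1 / 4 := by
      rw [pow_succ', ← div_div]
      have := div_le_self (div_nonneg hy.1 two_pos.le) (one_le_pow₀ (M₀ := ℝ) one_le_two (n := n))
      linarith [hy.2]
    have hx0 : letterFun .x0 (y / 2 ^ (n + 1)) = y / 2 ^ n := by
      have : letterFun .x0 (y / 2 ^ (n + 1)) = 2 * (y / 2 ^ (n + 1)) := by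
        simp only [letterFun]; split_ifs <;> linarith
      rw [this, pow_succ']; field_simp
    rw [Function.iterate_succ_apply, hx0, ih hy]

theorem letterFun_x0_iterate_one_sub (n : ℕ) (hy : y ∈ Icc 0 (1 / 2)) :
    (letterFun .x0)^[n] (1 - y) = 1 - y / 2 ^ n := by
  induction n generalizing y with
  | zero => simp
  | succ n ih =>
    have hx0 : letterFun .x0 (1 - y) = 1 - y / 2 := by
      obtain ⟨h0, h1⟩ := hy
      simp only [letterFun]; split_ifs <;> linarith
    rw [Function.iterate_succ_apply, hx0, ih ⟨by linarith [hy.1], by linarith [hy.2]⟩, div_div,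
      ← pow_succ']

theorem letterFun_x0inv_iterate (n : ℕ) (hy : y ∈ Icc 0 (1 / 2)) :
    (letterFun .x0inv)^[n] y = y / 2 ^ n := by
  conv_lhs => rw [← letterFun_x0_iterate_div_two_pow n hy]
  exact (Function.LeftInverse.iterate (letterFun_inv_letterFun .x0) n) _

theorem letterFun_x0inv_iterate_one_sub (n : ℕ) (hy : y ∈ Icc 0 (1 / 2)) :
    (letterFun .x0inv)^[n] (1 - y / 2 ^ n) = 1 - y := by
  rw [← letterFun_x0_iterate_one_sub n hy]
  exact (Function.LeftInverse.iterate (letterFun_inv_letterFun .x0) n) _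

end Iterate

section Endpoints

theorem vaMid_mem_Ioo {k : ℕ} (hk : 1 ≤ k) : vaMid k ∈ Ioo 0 (1 / 2) := by
  refine ⟨by unfold vaMid; positivity, ?_⟩
  calc (1 / 2 : ℝ) ^ (k + 1) < (1 / 2) ^ 1 :=
        pow_lt_pow_right_of_lt_one₀ (by norm_num) (by norm_num) (by omega)
    _ = 1 / 2 := pow_one _

theorem vaMid_lt_vbMid {k : ℕ} (hk : 1 ≤ k) : vaMid k < vbMid k := by
  have := (vaMid_mem_Ioo hk).2
  unfold vaMid vbMid at *
  linarith

theorem vbMid_mem_Ioo (k : ℕ) : vbMid k ∈ Ioo 0 1 := by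
  have := pow_lt_one₀ (by norm_num : (0 : ℝ) ≤ 1 / 2) (by norm_num) (by omega : k + 1 ≠ 0)
  have := pow_pos (by norm_num : (0 : ℝ) < 1 / 2) (k + 1)
  unfold vbMid
  constructor <;> linarith

theorem wordEval_wword_vaMid {k i : ℕ} (hk : 1 ≤ k) (hi : 1 ≤ i) :
    wordEval (wword k i) (vaMid k) = 3 / 2 ^ (i + 2) := by
  obtain ⟨j, rfl⟩ : ∃ j, k = j + 1 := ⟨k - 1, by omega⟩
  obtain ⟨m, rfl⟩ : ∃ m, i = m + 1 := ⟨i - 1, by omega⟩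
  have hsmall : 1 / (2 : ℝ) ^ (j + 2) ≤ 1 / 2 := by
    gcongr; exact le_self_pow₀ one_le_two (by omega)
  have h1 : (letterFun .x0inv)^[j] (vaMid (j + 1)) = 1 / 2 / 2 ^ (2 * j + 1) := by
    rw [vaMid, one_div_pow, letterFun_x0inv_iterate j ⟨by positivity, hsmall⟩]
    field_simp; ring
  have h2 : letterFun .x1inv (1 / 2 / 2 ^ (2 * j + 1)) = 1 / 2 / 2 ^ (2 * j + 1) := by
    have : 1 / 2 / 2 ^ (2 * j + 1) ≤ (1 / 2 : ℝ) :=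
      div_le_self (by norm_num) (one_le_pow₀ one_le_two)
    simp only [letterFun]; split_ifs <;> linarith
  have h3 : (letterFun .x0)^[2 * (j + 1)] (1 / 2 / 2 ^ (2 * j + 1)) = 3 / 4 := by
    rw [show 2 * (j + 1) = 1 + (2 * j + 1) by ring, Function.iterate_add_apply,
      letterFun_x0_iterate_div_two_pow _ ⟨by norm_num, le_rfl⟩]
    norm_num [letterFun]
  have h5 : (letterFun .x0inv)^[m + 1] (5 / 8) = 3 / 2 ^ (m + 1 + 2) := by
    rw [Function.iterate_succ_apply, show letterFun .x0inv (5 / 8) = 3 / 8 by norm_num [letterFun],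
      letterFun_x0inv_iterate m ⟨by norm_num, by norm_num⟩]
    field_simp; ring
  simp only [wword, wordEval_append, wordEval_replicate, wordEval_singleton, Nat.add_sub_cancel]
  rw [h1, h2, h3, show letterFun .x1inv (3 / 4) = 5 / 8 by norm_num [letterFun], h5]

theorem wordEval_wword_vbMid {k i : ℕ} (hi : i < 2 * k) :
    wordEval (wword k i) (vbMid k) = 1 - 3 / 2 ^ (2 * k + 2 - i) := by
  obtain ⟨j, rfl⟩ : ∃ j, k = j + 1 := ⟨k - 1, by omega⟩
  have h1 : (letterFun .x0inv)^[j] (vbMid (j + 1)) = 3 / 4 := by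
    rw [show vbMid (j + 1) = 1 - 1 / 4 / 2 ^ j by
        rw [vbMid, one_div_pow, pow_succ, pow_succ]; field_simp; ring,
      letterFun_x0inv_iterate_one_sub j ⟨by norm_num, by norm_num⟩]
    norm_num
  have h3 : (letterFun .x0)^[2 * (j + 1)] (5 / 8) = 1 - 3 / 8 / 2 ^ (2 * (j + 1)) := by
    rw [show (5 / 8 : ℝ) = 1 - 3 / 8 by norm_num,
      letterFun_x0_iterate_one_sub _ ⟨by norm_num, by norm_num⟩]
  have h4 : letterFun .x1inv (1 - 3 / 8 / 2 ^ (2 * (j + 1)))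
      = 1 - 3 / 2 ^ (2 * (j + 1) + 2 - i) / 2 ^ i := by
    have hsmall : 3 / 8 / 2 ^ (2 * (j + 1)) ≤ (1 / 8 : ℝ) := by
      rw [div_le_iff₀ (by positivity)]
      have : (2 : ℝ) ^ 2 ≤ 2 ^ (2 * (j + 1)) := pow_le_pow_right₀ one_le_two (by omega)
      linarith
    have hpos : 0 < 3 / 8 / (2 : ℝ) ^ (2 * (j + 1)) := by positivity
    have hx1inv : letterFun .x1inv (1 - 3 / 8 / 2 ^ (2 * (j + 1)))
        = 2 * (1 - 3 / 8 / 2 ^ (2 * (j + 1))) - 1 := by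
      simp only [letterFun]; split_ifs <;> linarith
    have e : (3 : ℝ) / 2 ^ (2 * (j + 1) + 2 - i) / 2 ^ i = 3 / 2 ^ (2 * (j + 1) + 2) := by
      rw [div_div, ← pow_add, Nat.sub_add_cancel (by omega)]
    rw [hx1inv, e, pow_add]
    field_simp; ring
  have h5 : (3 : ℝ) / 2 ^ (2 * (j + 1) + 2 - i) ∈ Icc 0 (1 / 2) := by
    refine ⟨by positivity, ?_⟩
    rw [div_le_iff₀ (by positivity)]
    have : (2 : ℝ) ^ 3 ≤ 2 ^ (2 * (j + 1) + 2 - i) := pow_le_pow_right₀ one_le_two (by omega)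
    linarith
  simp only [wword, wordEval_append, wordEval_replicate, wordEval_singleton, Nat.add_sub_cancel]
  rw [h1, show letterFun .x1inv (3 / 4) = 5 / 8 by norm_num [letterFun], h3, h4,
    letterFun_x0inv_iterate_one_sub i h5]

end Endpoints

theorem pos_of_madeInternalAt {w : Word} {t : ℕ} {x : ℝ} (h : madeInternalAt w t x) : 0 < t := by
  rcases Nat.eq_zero_or_pos t with rfl | ht
  · have := h.1.symm.trans h.2
    norm_num at this
  · exact ht

theorem le_of_madeInternalAt_vbMid {w : Word} {k t : ℕ} (h : madeInternalAt w t (vbMid k)) :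
    k ≤ t := by
  have ht := pos_of_madeInternalAt h
  have := abs_log_two_one_sub_take_sub_le w (vbMid_mem_Ioo k) (Nat.zero_le (t - 1))
  have hstart : Int.log 2 (1 - wordEval [] (vbMid k)) = -(k + 1 : ℕ) := by
    rw [← log_two_inv_two_pow]; congr 1; simp [wordEval, vbMid]
  have hend : Int.log 2 (1 - 3 / 4 : ℝ) = -(2 : ℕ) := by
    rw [← log_two_inv_two_pow]; norm_num
  rw [h.2, List.take_zero, hstart, hend, abs_le] at this
  omega

theorem add_two_mul_add_le_length {w : Word} {k i s t : ℕ} (hi : 1 ≤ i) (hik : i ≤ k)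
    (hw : wordEval w = wordEval (wword k i)) (hst : s < t)
    (hs : madeInternalAt w s (vbMid k)) (ht : madeInternalAt w t (vaMid k)) :
    s + 2 * k + i ≤ w.length + 1 := by
  have haend : wordEval w (vaMid k) = 3 / 2 ^ (i + 2) := by
    rw [hw, wordEval_wword_vaMid (by omega) hi]
  have hbend : wordEval w (vbMid k) = 1 - 3 / 2 ^ (2 * k + 2 - i) := by
    rw [hw, wordEval_wword_vbMid (by omega)]
  have htn : t - 1 ≤ w.length := by
    by_contra! h
    have h' := ht.2
    rw [List.take_of_length_le h.le, haend, div_eq_iff (by positivity)] at h'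
    have : (2 : ℝ) ^ 3 ≤ 2 ^ (i + 2) := pow_le_pow_right₀ one_le_two (by omega)
    linarith
  have hphase1 := abs_log_two_one_sub_take_sub_le w (vbMid_mem_Ioo k) (Nat.le_sub_one_of_lt hst)
  rw [hs.1, show (1 - 5 / 8 : ℝ) = 3 / 2 ^ 3 by norm_num, log_two_three_div_two_pow,
    abs_le] at hphase1
  have hphase2 := potential_take_sub_le w (vaMid_mem_Ioo (by omega)).1 (vaMid_lt_vbMid (by omega))
    (vbMid_mem_Ioo k).2 htn
  rw [List.take_length, haend, hbend, potential_three_div_two_pow (by omega), ht.2] at hphase2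
  have hmid := potential_three_quarters_le (wordEval_mem_Ioo (w.take (t - 1)) (vbMid_mem_Ioo k))
  omega

theorem statement8_general (L : Set Word) (c M : ℕ) (hM : 1 ≤ M)
    (hlen : ∀ f : ℝ → ℝ, InF f → ∀ w : Word, w ∈ L → wordEval w = f → w.length ≤ glen f + c)
    (C : ℕ) (hC : C = if Even (max c M) then max c M else max c M + 1)
    (k : ℕ) (hk : 1000 * C < k)
    (l : ℕ) (hl : l = C / 2 + 1)
    (i : ℕ) (hi1 : k - l ≤ i) (hi2 : i ≤ k)
    (wi' : Word) (hwL : wi' ∈ L) (hwe : wordEval wi' = wordEval (wword k i))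
    (h1 : CondW1 wi' k) :
    ∀ t : ℕ, madeInternalAt wi' t (vbMid k) → k ≤ t ∧ t ≤ k + C + 2 := by
  intro s hs
  obtain ⟨-, ⟨t, ht⟩, hbefore⟩ := h1
  have hcC : c ≤ C ∧ 1 ≤ C := by rw [hC]; split_ifs <;> omega
  have hcount := add_two_mul_add_le_length (by omega) hi2 hwe (hbefore s t hs ht) hs ht
  have hshort : wi'.length ≤ (wword k i).length + c :=
    calc wi'.length ≤ glen (wordEval wi') + c := hlen _ (inF_wordEval wi') wi' hwL rfl
      _ ≤ (wword k i).length + c := by rw [hwe]; gcongr; exact glen_wordEval_le _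
  rw [length_wword] at hshort
  exact ⟨le_of_madeInternalAt_vbMid hs, by omega⟩

theorem statement8 (L : Set Word) (c M : ℕ) (hM : 1 ≤ M)
    (hrep : ∀ f : ℝ → ℝ, InF f → ∃! w : Word, w ∈ L ∧ wordEval w = f)
    (hlen : ∀ f : ℝ → ℝ, InF f → ∀ w : Word, w ∈ L → wordEval w = f → w.length ≤ glen f + c)
    (hft : FellowTraveler L M)
    (C : ℕ) (hC : C = if Even (max c M) then max c M else max c M + 1)
    (k : ℕ) (hk : 1000 * C < k)
    (l : ℕ) (hl : l = C / 2 + 1)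
    (i : ℕ) (hi1 : k - l ≤ i) (hi2 : i ≤ k)
    (wi' : Word) (hwL : wi' ∈ L) (hwe : wordEval wi' = wordEval (wword k i))
    (h1 : CondW1 wi' k) :
    ∀ t : ℕ, madeInternalAt wi' t (vbMid k) → k ≤ t ∧ t ≤ k + C + 2 :=
  statement8_general L c M hM hlen C hC k hk l hl i hi1 hi2 wi' hwL hwe h1

end ThompsonAut
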